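/- Fix u ∈ (0,1) and r = (1−u)²/(4u). Let ξ_x have distribution μ(r,x). Then E(ξ_x)/x → 1/(1+u) as x → ∞. -/

import Mathlib

open Filter

/-- `h x` is the smallest integer `y` with `2 * y ≥ x` (the upper half of `x`). -/
def upperHalf (x : ℕ) : ℕ := (x + 1) / 2

noncomputable def rho (u : ℝ) : ℝ := (1 - u) ^ 2 / (4 * u)

/-- `A(r,x) = Σ_y y·C(2y,y)·C(y,x−y)·r^y`. -/
noncomputable def A (r : ℝ) (x : ℕ) : ℝ :=
  ∑ y ∈ Finset.Icc (upperHalf x) x,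
    (y : ℝ) * (Nat.choose (2 * y) y : ℝ) * (Nat.choose y (x - y) : ℝ) * r ^ y

/-- `B(r,x) = Σ_y C(2y,y)·C(y,x−y)·r^y`. -/
noncomputable def B (r : ℝ) (x : ℕ) : ℝ :=
  ∑ y ∈ Finset.Icc (upperHalf x) x,
    (Nat.choose (2 * y) y : ℝ) * (Nat.choose y (x - y) : ℝ) * r ^ y

/-!
Write `s = 2y - x ∈ [0, x]` for the excess of `y` over `x / 2` and `M k = ∑ s ^ k w y` for its
moments under the weights `w y = C(2y,y) C(y,x-y) r ^ y`. The ratio `w (y+1) / w y` is the rational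
function `2r(2y+1)(x-y) / ((2y+2-x)(2y+1-x))`; summing it against `1` and against `s` (the boundary
terms vanish) gives the exact recurrences
  `(1+r) M₂ = r(x²+x) M₀ + (1-r) M₁`,
  `(1+r) M₃ = (1-3r) M₂ + r(x²+x)(M₁ + 2M₀) - 2r M₁`.
Scaled by `x ^ k M₀`, they say that the second moment tends to `c² = r/(1+r)` and that the
third is `c²` times the first up to `o(1)`. The Cauchy–Schwarz inequalities `M₁² ≤ M₀M₂` and
`M₂² ≤ M₁M₃` then squeeze the scaled first moment to `c`, so
`E ξ / x = (1 + M₁/(x M₀))/2 → (1 + c)/2`, which is `1/(1+u)` for `r = (1-u)²/(4u)`.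
-/

open Finset Topology

theorem tendsto_of_sq_le_of_sq_le_mul {ι : Type*} {l : Filter ι} {a p t : ι → ℝ} {c : ℝ}
    (hc : 0 < c) (ha : ∀ i, a i ∈ Set.Icc 0 1) (hap : ∀ i, a i ^ 2 ≤ p i)
    (hpt : ∀ i, p i ^ 2 ≤ a i * t i) (hp : Tendsto p l (𝓝 (c ^ 2)))
    (ht : Tendsto (fun i => t i - c ^ 2 * a i) l (𝓝 0)) : Tendsto a l (𝓝 c) := by
  have hlower : Tendsto (fun i => (p i ^ 2 - |t i - c ^ 2 * a i|) / c ^ 2) l (𝓝 (c ^ 2)) := by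
    convert ((hp.pow 2).sub ht.abs).div_const (c ^ 2) using 2
    field_simp; simp
  -- `p² ≤ a t = c² a² + a (t - c² a)` bounds `a²` from below.
  have hsq : Tendsto (fun i => a i ^ 2) l (𝓝 (c ^ 2)) := by
    refine tendsto_of_tendsto_of_tendsto_of_le_of_le hlower hp (fun i => ?_) hap
    obtain ⟨ha0, ha1⟩ := ha i
    have herr : a i * (t i - c ^ 2 * a i) ≤ |t i - c ^ 2 * a i| :=
      calc a i * (t i - c ^ 2 * a i) ≤ |a i * (t i - c ^ 2 * a i)| := le_abs_self _
        _ = a i * |t i - c ^ 2 * a i| := by rw [abs_mul, abs_of_nonneg ha0]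
        _ ≤ |t i - c ^ 2 * a i| := mul_le_of_le_one_left (abs_nonneg _) ha1
    rw [div_le_iff₀ (by positivity)]
    nlinarith [hpt i]
  rw [← Real.sqrt_sq hc.le]
  exact hsq.sqrt.congr fun i => Real.sqrt_sq (ha i).1

theorem Nat.choose_succ_mul_sub_mul_sub (n k : ℕ) :
    (n + 1).choose k * (n + 1 - k) * (n - k) = (n + 1) * (k + 1) * n.choose (k + 1) := by
  calc (n + 1).choose k * (n + 1 - k) * (n - k)
      = (k + 1) * ((n + 1).choose (k + 1) * (n + 1 - (k + 1))) := by
        rw [← Nat.choose_succ_right_eq, Nat.add_sub_add_right]; ring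
    _ = (n + 1) * (k + 1) * n.choose (k + 1) := by rw [← Nat.choose_mul_succ_eq]; ring

noncomputable def weight (r : ℝ) (x y : ℕ) : ℝ :=
  (Nat.choose (2 * y) y : ℝ) * (Nat.choose y (x - y) : ℝ) * r ^ y

theorem weight_nonneg {r : ℝ} (hr : 0 ≤ r) (x y : ℕ) : 0 ≤ weight r x y := by
  unfold weight; positivity

theorem weight_succ_mul {r : ℝ} {x y : ℕ} (hxy : x ≤ 2 * y) (hyx : y < x) :
    weight r x (y + 1) * ((2 * y + 2 - x) * (2 * y + 1 - x)) =
      2 * r * (2 * y + 1) * (x - y) * weight r x y := by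
  obtain ⟨k, rfl⟩ : ∃ k, x = y + (k + 1) := ⟨x - y - 1, by omega⟩
  have hky : k ≤ y := by omega
  have hchoose := Nat.choose_succ_mul_sub_mul_sub y k
  have hcentral := Nat.succ_mul_centralBinom_succ y
  rw [Nat.centralBinom_eq_two_mul_choose, Nat.centralBinom_eq_two_mul_choose] at hcentral
  rw [← Nat.cast_inj (R := ℝ)] at hchoose hcentral
  push_cast [Nat.cast_sub hky, Nat.cast_sub (hky.trans (Nat.le_succ y))] at hchoose hcentral
  rw [← mul_left_cancel_iff_of_pos (by positivity : (0 : ℝ) < y + 1)]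
  simp only [weight, show y + (k + 1) - (y + 1) = k by omega, show y + (k + 1) - y = k + 1 by omega]
  push_cast
  linear_combination
    ((Nat.choose (y + 1) k : ℝ) * (y + 1 - k) * (y - k) * r ^ (y + 1)) * hcentral +
      (2 * (2 * y + 1) * (Nat.choose (2 * y) y : ℝ) * r ^ (y + 1)) * hchoose

theorem B_pos {r : ℝ} (hr : 0 < r) (x : ℕ) : 0 < B r x := by
  refine sum_pos' (fun y _ => weight_nonneg hr.le x y) ⟨x, ?_, ?_⟩
  · rw [mem_Icc]; unfold upperHalf; omega
  · simp only [Nat.sub_self, Nat.choose_zero_right, Nat.cast_one, mul_one]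
    have := Nat.centralBinom_pos x
    rw [Nat.centralBinom_eq_two_mul_choose] at this
    positivity

theorem two_mul_upperHalf (x : ℕ) : 2 * upperHalf x = x ∨ 2 * upperHalf x = x + 1 := by
  unfold upperHalf; omega

theorem excess_mem_Icc {x y : ℕ} (hy : y ∈ Icc (upperHalf x) x) :
    (2 * y - x : ℝ) ∈ Set.Icc 0 (x : ℝ) := by
  obtain ⟨hhy, hyx⟩ := mem_Icc.mp hy
  have := two_mul_upperHalf x
  constructor
  · rw [sub_nonneg]; exact_mod_cast (by omega : x ≤ 2 * y)
  · rw [sub_le_iff_le_add]; exact_mod_cast (by omega : 2 * y ≤ x + x)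

theorem sum_excess_mul_weight_shift (r : ℝ) (x : ℕ) (F : ℕ → ℝ) :
    ∑ y ∈ Icc (upperHalf x) x, (2 * y - x : ℝ) * (2 * y - x - 1) * F y * weight r x y =
      ∑ y ∈ Icc (upperHalf x) x, 2 * r * (2 * y + 1) * (x - y) * F (y + 1) * weight r x y := by
  have hhx : upperHalf x ≤ x := by unfold upperHalf; omega
  rw [← Ico_add_one_right_eq_Icc, sum_eq_sum_Ico_succ_bot (Nat.lt_add_one_of_le hhx),
    ← sum_Ico_add', sum_Ico_succ_top hhx]
  have hbot : (2 * upperHalf x - x : ℝ) * (2 * upperHalf x - x - 1) = 0 := by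
    rcases two_mul_upperHalf x with h | h <;>
      · rw [← Nat.cast_ofNat, ← Nat.cast_mul, h]; push_cast; ring
  simp only [hbot, sub_self, zero_mul, mul_zero, zero_add, add_zero]
  refine sum_congr rfl fun y hy => ?_
  obtain ⟨hhy, hyx⟩ := mem_Ico.mp hy
  have hxy : x ≤ 2 * y := by have := two_mul_upperHalf x; omega
  push_cast
  linear_combination F (y + 1) * weight_succ_mul (r := r) hxy hyx

noncomputable def excessMoment (r : ℝ) (x k : ℕ) : ℝ :=
  ∑ y ∈ Icc (upperHalf x) x, (2 * y - x : ℝ) ^ k * weight r x y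

theorem excessMoment_zero (r : ℝ) (x : ℕ) : excessMoment r x 0 = B r x := by
  simp only [excessMoment, pow_zero, one_mul]; rfl

theorem excessMoment_nonneg {r : ℝ} (hr : 0 ≤ r) (x k : ℕ) : 0 ≤ excessMoment r x k :=
  sum_nonneg fun y hy => mul_nonneg (pow_nonneg (excess_mem_Icc hy).1 k) (weight_nonneg hr x y)

theorem excessMoment_succ_le {r : ℝ} (hr : 0 ≤ r) (x k : ℕ) :
    excessMoment r x (k + 1) ≤ x * excessMoment r x k := by
  rw [excessMoment, excessMoment, mul_sum]
  refine sum_le_sum fun y hy => ?_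
  obtain ⟨hs0, hsx⟩ := excess_mem_Icc hy
  rw [pow_succ', mul_assoc]
  exact mul_le_mul_of_nonneg_right hsx (mul_nonneg (pow_nonneg hs0 k) (weight_nonneg hr x y))

theorem excessMoment_succ_sq_le {r : ℝ} (hr : 0 ≤ r) (x k : ℕ) :
    excessMoment r x (k + 1) ^ 2 ≤ excessMoment r x k * excessMoment r x (k + 2) := by
  refine sum_sq_le_sum_mul_sum_of_sq_le_mul _
    (fun y hy => mul_nonneg (pow_nonneg (excess_mem_Icc hy).1 _) (weight_nonneg hr x y))
    (fun y hy => mul_nonneg (pow_nonneg (excess_mem_Icc hy).1 _) (weight_nonneg hr x y))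
    fun y _ => le_of_eq (by ring)

theorem two_mul_A (r : ℝ) (x : ℕ) : 2 * A r x = x * B r x + excessMoment r x 1 := by
  simp only [A, ← excessMoment_zero, excessMoment, mul_sum, ← sum_add_distrib]
  exact sum_congr rfl fun y _ => by simp only [weight]; ring

theorem excessMoment_two_eq (r : ℝ) (x : ℕ) :
    (1 + r) * excessMoment r x 2 =
      r * (x ^ 2 + x) * excessMoment r x 0 + (1 - r) * excessMoment r x 1 := by
  have h := sum_excess_mul_weight_shift r x fun _ => 1
  rw [← sub_eq_zero] at h ⊢
  rw [← h]
  simp only [excessMoment, mul_sum, ← sum_sub_distrib, ← sum_add_distrib]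
  exact sum_congr rfl fun y _ => by ring

theorem excessMoment_three_eq (r : ℝ) (x : ℕ) :
    (1 + r) * excessMoment r x 3 =
      (1 - 3 * r) * excessMoment r x 2 +
        r * (x ^ 2 + x) * (excessMoment r x 1 + 2 * excessMoment r x 0) -
          2 * r * excessMoment r x 1 := by
  have h := sum_excess_mul_weight_shift r x fun y => 2 * y - x
  rw [← sub_eq_zero] at h ⊢
  rw [← h]
  simp only [excessMoment, mul_sum, ← sum_sub_distrib, ← sum_add_distrib]
  exact sum_congr rfl fun y _ => by push_cast; ring

noncomputable def scaledMoment (r : ℝ) (x k : ℕ) : ℝ :=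
  excessMoment r x k / (x ^ k * excessMoment r x 0)

theorem scaledMoment_zero {r : ℝ} (hr : 0 < r) (x : ℕ) : scaledMoment r x 0 = 1 := by
  rw [scaledMoment, pow_zero, one_mul, div_self (excessMoment_zero r x ▸ B_pos hr x).ne']

theorem scaledMoment_one_mem_Icc {r : ℝ} (hr : 0 ≤ r) (x : ℕ) :
    scaledMoment r x 1 ∈ Set.Icc 0 1 :=
  ⟨div_nonneg (excessMoment_nonneg hr x 1)
      (mul_nonneg (pow_nonneg x.cast_nonneg 1) (excessMoment_nonneg hr x 0)),
    div_le_one_of_le₀ (by simpa using excessMoment_succ_le hr x 0)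
      (mul_nonneg (pow_nonneg x.cast_nonneg 1) (excessMoment_nonneg hr x 0))⟩

theorem scaledMoment_succ_sq_le {r : ℝ} (hr : 0 ≤ r) (x k : ℕ) :
    scaledMoment r x (k + 1) ^ 2 ≤ scaledMoment r x k * scaledMoment r x (k + 2) := by
  rw [scaledMoment, scaledMoment, scaledMoment, div_pow, div_mul_div_comm,
    show (x : ℝ) ^ k * excessMoment r x 0 * (x ^ (k + 2) * excessMoment r x 0) =
      (x ^ (k + 1) * excessMoment r x 0) ^ 2 by ring]
  exact div_le_div_of_nonneg_right (excessMoment_succ_sq_le hr x k) (sq_nonneg _)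

theorem A_div_mul_B_eq {r : ℝ} (hr : 0 < r) {x : ℕ} (hx : x ≠ 0) :
    A r x / (x * B r x) = (1 + scaledMoment r x 1) / 2 := by
  have hB := (B_pos hr x).ne'
  rw [scaledMoment, excessMoment_zero, eq_div_iff two_ne_zero, div_mul_eq_mul_div, mul_comm,
    two_mul_A]
  field_simp

theorem scaledMoment_two_eq {r : ℝ} (hr : 0 < r) {x : ℕ} (hx : x ≠ 0) :
    scaledMoment r x 2 =
      (r + r * (x : ℝ)⁻¹ + (1 - r) * (scaledMoment r x 1 * (x : ℝ)⁻¹)) / (1 + r) := by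
  have hM := (excessMoment_zero r x ▸ B_pos hr x).ne'
  rw [scaledMoment, scaledMoment]
  field_simp
  linear_combination excessMoment_two_eq r x

theorem scaledMoment_three_sub_eq {r : ℝ} (hr : 0 < r) {x : ℕ} (hx : x ≠ 0) :
    scaledMoment r x 3 - r / (1 + r) * scaledMoment r x 1 =
      ((1 - 3 * r) * (scaledMoment r x 2 * (x : ℝ)⁻¹) + r * (scaledMoment r x 1 * (x : ℝ)⁻¹) +
        2 * r * (x : ℝ)⁻¹ + 2 * r * (x : ℝ)⁻¹ * (x : ℝ)⁻¹ -
          2 * r * (scaledMoment r x 1 * (x : ℝ)⁻¹) * (x : ℝ)⁻¹) / (1 + r) := by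
  have hM := (excessMoment_zero r x ▸ B_pos hr x).ne'
  rw [scaledMoment, scaledMoment, scaledMoment]
  field_simp
  linear_combination excessMoment_three_eq r x

theorem tendsto_scaledMoment_one_mul_inv {r : ℝ} (hr : 0 ≤ r) :
    Tendsto (fun x : ℕ => scaledMoment r x 1 * (x : ℝ)⁻¹) atTop (𝓝 0) :=
  squeeze_zero
    (fun x => mul_nonneg (scaledMoment_one_mem_Icc hr x).1 (inv_nonneg.2 x.cast_nonneg))
    (fun x => mul_le_of_le_one_left (inv_nonneg.2 x.cast_nonneg) (scaledMoment_one_mem_Icc hr x).2)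
    (tendsto_inv_atTop_nhds_zero_nat (𝕜 := ℝ))

theorem tendsto_scaledMoment_two {r : ℝ} (hr : 0 < r) :
    Tendsto (fun x => scaledMoment r x 2) atTop (𝓝 (r / (1 + r))) := by
  have hinv := tendsto_inv_atTop_nhds_zero_nat (𝕜 := ℝ)
  have h := (((tendsto_const_nhds (x := r)).add (hinv.const_mul r)).add
    ((tendsto_scaledMoment_one_mul_inv hr.le).const_mul (1 - r))).div_const (1 + r)
  rw [mul_zero, mul_zero, add_zero, add_zero] at h
  exact h.congr' ((eventually_ne_atTop 0).mono fun x hx => (scaledMoment_two_eq hr hx).symm)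

theorem tendsto_scaledMoment_three_sub {r : ℝ} (hr : 0 < r) :
    Tendsto (fun x => scaledMoment r x 3 - r / (1 + r) * scaledMoment r x 1) atTop (𝓝 0) := by
  have hinv := tendsto_inv_atTop_nhds_zero_nat (𝕜 := ℝ)
  have ha := tendsto_scaledMoment_one_mul_inv hr.le
  have h := (((((((tendsto_scaledMoment_two hr).mul hinv).const_mul (1 - 3 * r)).add
    (ha.const_mul r)).add (hinv.const_mul (2 * r))).add ((hinv.const_mul (2 * r)).mul hinv)).sub
    ((ha.const_mul (2 * r)).mul hinv)).div_const (1 + r)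
  simp only [mul_zero, add_zero, sub_zero, zero_div] at h
  exact h.congr' ((eventually_ne_atTop 0).mono fun x hx => (scaledMoment_three_sub_eq hr hx).symm)

theorem tendsto_A_div_mul_B {r : ℝ} (hr : 0 < r) :
    Tendsto (fun x : ℕ => A r x / (x * B r x)) atTop (𝓝 ((1 + √(r / (1 + r))) / 2)) := by
  have hc : 0 < √(r / (1 + r)) := Real.sqrt_pos.2 (by positivity)
  have hc2 : √(r / (1 + r)) ^ 2 = r / (1 + r) := Real.sq_sqrt (by positivity)
  have ha : Tendsto (fun x => scaledMoment r x 1) atTop (𝓝 √(r / (1 + r))) :=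
    tendsto_of_sq_le_of_sq_le_mul (p := (scaledMoment r · 2)) (t := (scaledMoment r · 3))
      hc (scaledMoment_one_mem_Icc hr.le)
      (fun x => by simpa [scaledMoment_zero hr] using scaledMoment_succ_sq_le hr.le x 0)
      (scaledMoment_succ_sq_le hr.le · 1) (by rw [hc2]; exact tendsto_scaledMoment_two hr)
      (by rw [hc2]; exact tendsto_scaledMoment_three_sub hr)
  exact ((ha.const_add 1).div_const 2).congr'
    ((eventually_ne_atTop 0).mono fun x hx => (A_div_mul_B_eq hr hx).symm)

theorem mean_of_limit_posterior (u : ℝ) (hu : u ∈ Set.Ioo (0 : ℝ) 1) :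
    Tendsto (fun x : ℕ => A (rho u) x / ((x : ℝ) * B (rho u) x)) atTop
      (nhds (1 / (1 + u))) := by
  obtain ⟨hu0, hu1⟩ := hu
  have hr : 0 < rho u := div_pos (pow_pos (sub_pos.2 hu1) 2) (by positivity)
  have hsqrt : √(rho u / (1 + rho u)) = (1 - u) / (1 + u) := by
    rw [show rho u / (1 + rho u) = ((1 - u) / (1 + u)) ^ 2 by unfold rho; field_simp; ring,
      Real.sqrt_sq (div_nonneg (sub_nonneg.2 hu1.le) (by positivity))]
  convert tendsto_A_div_mul_B hr using 2
  rw [hsqrt]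
  field_simp
  ring
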